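/- arXiv:1504.06058 — 5 statements merged into one kernel-verified Lean document; each statement's English description precedes it below -/
import Mathlib

section
/- For all x_i, x_j ∈ (0,1) and integer k ≥ 2, (1 − x_j/k)^k − (1 − x_j/(k − x_i))^k ≤ x_i x_j / (k − 1). -/
/-!
Write `a = 1 - x_j/k` and `b = 1 - x_j/(k - x_i)`. Both lie in `[0, 1]`, so the factorization
`a^k - b^k = (a - b) ∑ a^t b^(k-1-t)` bounds the left side by `k (a - b)`, and
`a - b = x_i x_j / (k (k - x_i))`. Hence the difference is at most `x_i x_j / (k - x_i)`, which is
at most `x_i x_j / (k - 1)` because `x_i < 1`.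
-/

lemma pow_sub_pow_le_of_abs_le_one {R : Type*} [CommRing R] [LinearOrder R] [IsOrderedRing R]
    {a b : R} (ha : |a| ≤ 1) (hb : |b| ≤ 1) (n : ℕ) :
    a ^ n - b ^ n ≤ n * |a - b| := by
  have hmax : max |a| |b| ^ (n - 1) ≤ 1 :=
    pow_le_one₀ (le_max_of_le_left (abs_nonneg a)) (max_le ha hb)
  calc a ^ n - b ^ n ≤ |a ^ n - b ^ n| := le_abs_self _
    _ ≤ |a - b| * n * max |a| |b| ^ (n - 1) := abs_pow_sub_pow_le ..
    _ ≤ |a - b| * n * 1 := by gcongr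
    _ = n * |a - b| := by ring

lemma abs_one_sub_div_le_one {K : Type*} [Field K] [LinearOrder K] [IsStrictOrderedRing K]
    {x c : K} (hx : 0 ≤ x) (hxc : x ≤ c) :
    |1 - x / c| ≤ 1 := by
  have hc : 0 ≤ c := hx.trans hxc
  have h0 : 0 ≤ x / c := div_nonneg hx hc
  have h1 : x / c ≤ 1 := div_le_one_of_le₀ hxc hc
  exact abs_le.mpr ⟨by linarith, by linarith⟩

lemma one_sub_div_sub_one_sub_div {K : Type*} [Field K] {x y c : K} (hc : c ≠ 0) (hcy : c - y ≠ 0) :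
    (1 - x / c) - (1 - x / (c - y)) = x * y / (c * (c - y)) := by
  field_simp
  ring

/-- For `x_i, x_j ∈ (0,1)` and integer `k ≥ 2`,
`(1 − x_j/k)^k − (1 − x_j/(k − x_i))^k ≤ x_i x_j / (k − 1)`. -/
theorem stmt_7 (xi xj : ℝ) (hxi : xi ∈ Set.Ioo (0 : ℝ) 1) (hxj : xj ∈ Set.Ioo (0 : ℝ) 1)
    (k : ℕ) (hk : 2 ≤ k) :
    (1 - xj / k) ^ k - (1 - xj / (k - xi)) ^ k ≤ xi * xj / (k - 1) := by
  obtain ⟨hxi0, hxi1⟩ := hxi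
  obtain ⟨hxj0, hxj1⟩ := hxj
  have hk2 : (2 : ℝ) ≤ k := by exact_mod_cast hk
  have hki : 0 < (k : ℝ) - xi := by linarith
  have hgap : (1 - xj / k) - (1 - xj / (k - xi)) = xj * xi / (k * (k - xi)) :=
    one_sub_div_sub_one_sub_div (by positivity) hki.ne'
  calc (1 - xj / k) ^ k - (1 - xj / (k - xi)) ^ k
      ≤ k * |(1 - xj / k) - (1 - xj / (k - xi))| :=
        pow_sub_pow_le_of_abs_le_one (abs_one_sub_div_le_one hxj0.le (by linarith))
          (abs_one_sub_div_le_one hxj0.le (by linarith)) k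
    _ = xi * xj / (k - xi) := by
        rw [hgap, abs_of_nonneg (by positivity)]
        field_simp
    _ ≤ xi * xj / (k - 1) := by gcongr; linarith
end

section
/- For x_i, x_j ∈ (0,1) and integer k ≥ 2, define z_{ii} = 1 − (1 − x_i/k)^k and z_{ij} = 1 − (1 − x_i/k)^k − (1 − x_j/k)^k + (1 − x_i/k − x_j/k)^k. Then z_{ij}/z_{ii} ≥ ((k−2)/(k−1) − 1/e) x_j. -/
/-!
Write `a = x_i/k`, `b = x_j/k`, `k = n + 1`. Since `1 - a - b ≤ (1 - a)(1 - b)`, the probability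
`(1-b)^k - (1-a-b)^k` that `i` is covered and `j` is not is at most `(1-b)^n z_{ii}`, so
`z_{ij}/z_{ii} ≥ 1 - (1-b)^n`. By concavity of `t ↦ 1 - (1-t)^n` this is at least
`x_j (1 - (1 - 1/k)^n)`, and `(1 - 1/k)^n ≤ e^{-1} e^{1/k} ≤ e^{-1} + 1/n`.
-/

open Real

lemma pow_succ_sub_pow_succ_le {a b : ℝ} (ha : 0 ≤ a) (hb : 0 ≤ b) (hab : a + b ≤ 1) (n : ℕ) :
    (1 - b) ^ (n + 1) - (1 - a - b) ^ (n + 1) ≤ (1 - b) ^ n * (1 - (1 - a) ^ (n + 1)) := by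
  induction n with
  | zero => simp
  | succ n ih =>
    have hv : (1 - a - b) ^ (n + 1) ≤ ((1 - b) * (1 - a)) ^ (n + 1) :=
      pow_le_pow_left₀ (by linarith) (by nlinarith) _
    calc (1 - b) ^ (n + 2) - (1 - a - b) ^ (n + 2)
        = (1 - b) * ((1 - b) ^ (n + 1) - (1 - a - b) ^ (n + 1)) + a * (1 - a - b) ^ (n + 1) := by
          ring
      _ ≤ (1 - b) * ((1 - b) ^ n * (1 - (1 - a) ^ (n + 1))) + a * ((1 - b) * (1 - a)) ^ (n + 1) := by
          gcongr; linarith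
      _ = (1 - b) ^ (n + 1) * (1 - (1 - a) ^ (n + 2)) := by rw [mul_pow]; ring

lemma one_sub_pow_le_joint_div {a b : ℝ} (ha : 0 < a) (hb : 0 ≤ b) (hab : a + b ≤ 1) (n : ℕ) :
    1 - (1 - b) ^ n ≤
      (1 - (1 - a) ^ (n + 1) - (1 - b) ^ (n + 1) + (1 - a - b) ^ (n + 1)) /
        (1 - (1 - a) ^ (n + 1)) := by
  have hz : 0 < 1 - (1 - a) ^ (n + 1) :=
    sub_pos.2 (pow_lt_one₀ (by linarith) (by linarith) n.succ_ne_zero)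
  rw [le_div_iff₀ hz]
  linarith [pow_succ_sub_pow_succ_le ha.le hb hab n]

lemma mul_one_sub_one_sub_pow_le {c s : ℝ} (hc0 : 0 ≤ c) (hc1 : c ≤ 1) (hs0 : 0 ≤ s)
    (hs1 : s ≤ 1) (n : ℕ) :
    c * (1 - (1 - s) ^ n) ≤ 1 - (1 - c * s) ^ n := by
  have hcs : c * s ≤ s := mul_le_of_le_one_left hs0 hc1
  rw [← mul_neg_geom_sum, ← mul_neg_geom_sum, sub_sub_cancel, sub_sub_cancel, ← mul_assoc]
  gcongr

lemma one_sub_inv_succ_pow_le {n : ℕ} (hn : 0 < n) :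
    (1 - 1 / ((n : ℝ) + 1)) ^ n ≤ exp (-1) + 1 / n := by
  have hn' : (0 : ℝ) < n := by exact_mod_cast hn
  have hr : 1 / ((n : ℝ) + 1) < 1 := by rw [div_lt_one (by positivity)]; linarith
  calc (1 - 1 / ((n : ℝ) + 1)) ^ n ≤ exp (-(1 / ((n : ℝ) + 1))) ^ n := by
        gcongr
        exact one_sub_le_exp_neg _
    _ = exp (-1) * exp (1 / ((n : ℝ) + 1)) := by
        rw [← exp_nat_mul, ← exp_add]; congr 1; field_simp; ring
    _ ≤ exp (-1) * (1 + 1 / n) := by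
        gcongr
        calc exp (1 / ((n : ℝ) + 1)) ≤ 1 / (1 - 1 / ((n : ℝ) + 1)) :=
              exp_bound_div_one_sub_of_interval (by positivity) hr
          _ = 1 + 1 / n := by
            rw [one_sub_div (by positivity), add_sub_cancel_right, one_div_div]; field_simp
    _ = exp (-1) + exp (-1) * (1 / n) := by ring
    _ ≤ exp (-1) + 1 / n := by
        gcongr
        exact mul_le_of_le_one_left (by positivity) (exp_le_one_iff.2 (by norm_num))

/-- With `z_{ii} = 1 − (1 − x_i/k)^k` and
`z_{ij} = 1 − (1 − x_i/k)^k − (1 − x_j/k)^k + (1 − x_i/k − x_j/k)^k`, for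
`x_i, x_j ∈ (0,1)` and `k ≥ 2` one has `z_{ij}/z_{ii} ≥ ((k−2)/(k−1) − 1/e) x_j`. -/
theorem stmt_9 (xi xj : ℝ) (hxi : xi ∈ Set.Ioo (0 : ℝ) 1) (hxj : xj ∈ Set.Ioo (0 : ℝ) 1)
    (k : ℕ) (hk : 2 ≤ k) :
    (1 - (1 - xi / k) ^ k - (1 - xj / k) ^ k + (1 - xi / k - xj / k) ^ k) /
        (1 - (1 - xi / k) ^ k) ≥
      (((k : ℝ) - 2) / ((k : ℝ) - 1) - 1 / Real.exp 1) * xj := by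
  obtain ⟨hxi0, hxi1⟩ := hxi
  obtain ⟨hxj0, hxj1⟩ := hxj
  obtain ⟨n, rfl⟩ : ∃ n, k = n + 1 := ⟨k - 1, by omega⟩
  have hn : 0 < n := by omega
  have hK : (0 : ℝ) < n + 1 := by positivity
  have hK2 : (2 : ℝ) ≤ n + 1 := by exact_mod_cast hk
  push_cast
  have hab : xi / (n + 1) + xj / (n + 1) ≤ 1 := by rw [← add_div, div_le_one hK]; linarith
  have hratio := one_sub_pow_le_joint_div (div_pos hxi0 hK) (div_pos hxj0 hK).le hab n
  have hscaled : xj * (1 - (1 - 1 / ((n : ℝ) + 1)) ^ n) ≤ 1 - (1 - xj / (n + 1)) ^ n := by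
    simpa only [mul_one_div] using mul_one_sub_one_sub_pow_le (s := 1 / (n + 1)) hxj0.le hxj1.le
      (by positivity) ((div_le_one hK).2 (by linarith)) n
  have hcoef : ((n : ℝ) + 1 - 2) / (n + 1 - 1) - 1 / exp 1 ≤ 1 - (1 - 1 / ((n : ℝ) + 1)) ^ n := by
    have hn' : (n : ℝ) ≠ 0 := Nat.cast_ne_zero.2 hn.ne'
    rw [add_sub_cancel_right, one_div (exp 1), ← exp_neg]
    linarith [one_sub_inv_succ_pow_le hn, show ((n : ℝ) + 1 - 2) / n = 1 - 1 / n by field_simp; ring]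
  rw [ge_iff_le]
  calc _ ≤ xj * (1 - (1 - 1 / ((n : ℝ) + 1)) ^ n) := by
        rw [mul_comm]; exact mul_le_mul_of_nonneg_left hcoef hxj0.le
    _ ≤ _ := hscaled.trans hratio
end

section
/- Suppose k resources are each placed independently, with resource placement distribution assigning probability x_t/k to target t where ∑_t x_t ≤ k (sampling with replacement, i.e., a sequence of exactly k i.i.d. draws). Suppose instead one continues i.i.d. draws until exactly k distinct targets have appeared (sampling without replacement in the coupled sense). Then for every target i, the probability y_{ii} that i appears in the without-replacement process is at least the probability z_{ii} = 1 − (1 − x_i/k)^k that i appears among the first k draws. -/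
/-!
If `i` occurs among the first `k` draws, then at that moment at most `k` distinct elements have
been drawn, so the without-replacement process also sees `i`. Hence `y_{ii}` is at least one minus
the probability that the first `k` draws all avoid `i`, and by the cylinder formula that
probability is `(∑_{j ≠ i} x_j / k)^k = (1 - x_i / k)^k`.
-/

open MeasureTheory Finset ENNReal

section
variable {α : Type*} [MeasurableSpace α] {μ : Measure (ℕ → α)}

theorem measurableSet_forall_lt_mem [MeasurableSingletonClass α] (T : Finset α) (t : ℕ) :
    MeasurableSet {ω : ℕ → α | ∀ s < t, ω s ∈ T} := by
  simp only [Set.ofPred_forall]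
  exact .iInter fun s => .iInter fun _ => T.measurableSet.preimage (measurable_pi_apply s)

theorem measurableSet_forall_fin_eq [MeasurableSingletonClass α] {t : ℕ} (f : Fin t → α) :
    MeasurableSet {ω : ℕ → α | ∀ s : Fin t, ω s = f s} := by
  simp only [Set.ofPred_forall]
  exact .iInter fun s => (measurableSet_singleton (f s)).preimage (measurable_pi_apply (s : ℕ))

theorem measure_forall_fin_eq [Nonempty α] {p : α → ℝ≥0∞}
    (hcyl : ∀ (t : ℕ) (g : ℕ → α), μ {ω | ∀ s < t, ω s = g s} = ∏ s ∈ range t, p (g s))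
    {t : ℕ} (f : Fin t → α) :
    μ {ω | ∀ s : Fin t, ω s = f s} = ∏ s, p (f s) := by
  classical
  let g : ℕ → α := fun s => if h : s < t then f ⟨s, h⟩ else Classical.arbitrary α
  have hg (s : Fin t) : g s = f s := dif_pos s.isLt
  calc μ {ω | ∀ s : Fin t, ω s = f s} = μ {ω | ∀ s < t, ω s = g s} := by
        congr 1; ext ω
        simp only [Set.mem_ofPred_eq, Fin.forall_iff, ← hg]
    _ = ∏ s, p (f s) := by
        rw [hcyl, ← Fin.prod_univ_eq_prod_range]
        simp only [hg]

theorem measure_forall_lt_mem [MeasurableSingletonClass α] [Nonempty α] {p : α → ℝ≥0∞}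
    (hcyl : ∀ (t : ℕ) (g : ℕ → α), μ {ω | ∀ s < t, ω s = g s} = ∏ s ∈ range t, p (g s))
    (T : Finset α) (t : ℕ) :
    μ {ω | ∀ s < t, ω s ∈ T} = (∑ a ∈ T, p a) ^ t := by
  classical
  have hunion : {ω : ℕ → α | ∀ s < t, ω s ∈ T} =
      ⋃ f ∈ Fintype.piFinset fun _ : Fin t => T, {ω | ∀ s : Fin t, ω s = f s} := by
    ext ω
    simp only [Set.mem_ofPred_eq, Set.mem_iUnion, Fintype.mem_piFinset, exists_prop]
    constructor
    · intro h
      exact ⟨fun s => ω s, fun s => h s s.isLt, fun _ => rfl⟩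
    · rintro ⟨f, hfT, hωf⟩ s hs
      simpa [hωf ⟨s, hs⟩] using hfT ⟨s, hs⟩
  have hdisj : (Fintype.piFinset fun _ : Fin t => T : Set (Fin t → α)).PairwiseDisjoint
      fun f => {ω : ℕ → α | ∀ s : Fin t, ω s = f s} := by
    intro f _ f' _ hne
    refine Set.disjoint_left.mpr fun ω hω hω' => hne (funext fun s => ?_)
    exact (hω s).symm.trans (hω' s)
  rw [hunion, measure_biUnion_finset hdisj fun f _ => measurableSet_forall_fin_eq f,
    ← Fin.prod_const, prod_univ_sum]
  exact sum_congr rfl fun f _ => measure_forall_fin_eq hcyl f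

end

theorem sum_erase_ofReal_div {ι : Type*} [Fintype ι] [DecidableEq ι] {x : ι → ℝ} {c : ℝ}
    (hx : ∀ t, 0 ≤ x t) (hsum : ∑ t, x t = c) (hc : 0 < c) (i : ι) :
    ∑ j ∈ univ.erase i, ENNReal.ofReal (x j / c) = ENNReal.ofReal (1 - x i / c) := by
  rw [← ENNReal.ofReal_sum_of_nonneg fun j _ => div_nonneg (hx j) hc.le, ← sum_div,
    sum_erase_eq_sub (mem_univ i), hsum, sub_div, div_self hc.ne']

theorem exists_eq_card_image_range_le_of_lt {α : Type*} [DecidableEq α] {ω : ℕ → α} {i : α}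
    {s k : ℕ} (hs : s < k) (hsi : ω s = i) :
    ∃ t, ω t = i ∧ (image ω (range (t + 1))).card ≤ k :=
  ⟨s, hsi, card_image_le.trans (by simpa using hs)⟩

/-- Coupling bound: drawing i.i.d. from the distribution `(x_1/k,…,x_n/k)` until `k`
distinct targets appear, the probability `y_{ii}` that target `i` appears is at
least `z_{ii} = 1 − (1 − x_i/k)^k`, the probability it appears among the first `k`
draws. The i.i.d. measure `μ` on infinite draw sequences is specified by its
cylinder probabilities. -/
theorem stmt_10 (n k : ℕ) (hk : 1 ≤ k) (x : Fin n → ℝ) (hx : ∀ t, 0 ≤ x t)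
    (hsum : ∑ t, x t = (k : ℝ))
    (μ : Measure (ℕ → Fin n)) [IsProbabilityMeasure μ]
    (hcyl : ∀ (t : ℕ) (g : ℕ → Fin n),
      μ {ω | ∀ s < t, ω s = g s} =
        ∏ s ∈ Finset.range t, ENNReal.ofReal (x (g s) / k))
    (i : Fin n) :
    (μ {ω | ∃ t : ℕ, ω t = i ∧ (Finset.image ω (Finset.range (t + 1))).card ≤ k}).toReal ≥
      1 - (1 - x i / k) ^ k := by
  have hk0 : (0 : ℝ) < k := by exact_mod_cast hk
  have hxi : 0 ≤ 1 - x i / k := by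
    rw [sub_nonneg, div_le_one hk0, ← hsum]
    exact single_le_sum (fun t _ => hx t) (mem_univ i)
  set A := {ω : ℕ → Fin n | ∀ s < k, ω s ∈ univ.erase i}
  have : Nonempty (Fin n) := ⟨i⟩
  have hA : μ.real A = (1 - x i / k) ^ k := by
    rw [measureReal_def, measure_forall_lt_mem (p := fun a => ENNReal.ofReal (x a / k)) hcyl,
      sum_erase_ofReal_div hx hsum hk0, ← ENNReal.ofReal_pow hxi, ENNReal.toReal_ofReal (pow_nonneg hxi k)]
  calc (1 : ℝ) - (1 - x i / k) ^ k = μ.real Aᶜ := by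
        rw [probReal_compl_eq_one_sub (measurableSet_forall_lt_mem _ k), hA]
    _ ≤ μ.real _ := measureReal_mono fun ω hω => by
        obtain ⟨s, hs, hsi⟩ : ∃ s < k, ω s = i := by simpa [A] using hω
        exact exists_eq_card_image_range_le_of_lt hs hsi
end

section
/- Let X ∈ Conv({v vᵀ : v ∈ {0,1}^n}) satisfy tr(X) = k and ∑_{i,j} X_{ij} = k². Then X ∈ Conv({v vᵀ : v ∈ {0,1}^n, ∑_i v_i = k}). That is, the polytope P(n,k) equals the intersection of the full correlation polytope P(n) with the hyperplanes tr(X) = k and sum(X) = k². -/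
/-!
Write `X` as a convex combination `∑ pᵢ vᵢ vᵢᵀ` of atoms and let `sᵢ` be the number of ones
of `vᵢ`. The trace and the entry sum of `vᵢ vᵢᵀ` are `sᵢ` and `sᵢ²`, so the two constraints say
`∑ pᵢ sᵢ = k` and `∑ pᵢ sᵢ² = k²`, i.e. `∑ pᵢ (sᵢ - k)² = 0`: every atom with positive weight
has exactly `k` ones. Abstractly, the linear functional `entrySum - 2k · trace` is bounded below by
`-k²` on the atoms and attains this bound at `X`, so `X` only uses atoms where it is attained.
-/

open Matrix Finset

section LevelSet

variable {𝕜 E : Type*} [Field 𝕜] [LinearOrder 𝕜] [IsStrictOrderedRing 𝕜]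
  [AddCommGroup E] [Module 𝕜 E] {s : Set E} {x : E}

theorem mem_convexHull_sep_of_le_of_apply_eq {φ : E →ₗ[𝕜] 𝕜} {c : 𝕜}
    (hs : ∀ y ∈ s, c ≤ φ y) (hx : x ∈ convexHull 𝕜 s) (hφx : φ x = c) :
    x ∈ convexHull 𝕜 {y ∈ s | φ y = c} := by
  obtain ⟨ι, t, w, z, hw₀, hw₁, hz, rfl⟩ := (convexHull_eq s).subset hx
  have hgap : ∑ i ∈ t, w i * (φ (z i) - c) = 0 := by
    rw [centerMass_eq_of_sum_1 _ _ hw₁, map_sum] at hφx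
    simp only [map_smul, smul_eq_mul] at hφx
    simp only [mul_sub, sum_sub_distrib, ← sum_mul, hφx, hw₁, one_mul, sub_self]
  have hzero : ∀ i ∈ t, w i ≠ 0 → φ (z i) = c := fun i hi hwi =>
    have := (sum_eq_zero_iff_of_nonneg fun j hj =>
      mul_nonneg (hw₀ j hj) (sub_nonneg.2 (hs _ (hz j hj)))).1 hgap i hi
    sub_eq_zero.1 ((mul_eq_zero.1 this).resolve_left hwi)
  rw [← centerMass_filter_ne_zero]
  refine centerMass_mem_convexHull _ (fun i hi => hw₀ i (mem_filter.1 hi).1)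
    (by rw [sum_filter_ne_zero, hw₁]; exact one_pos) fun i hi => ?_
  obtain ⟨hi, hwi⟩ := mem_filter.1 hi
  exact ⟨hz i hi, hzero i hi hwi⟩

theorem mem_convexHull_sep_of_sq_le {f g : E →ₗ[𝕜] 𝕜} {k : 𝕜}
    (hs : ∀ y ∈ s, f y ^ 2 ≤ g y) (hx : x ∈ convexHull 𝕜 s) (hfx : f x = k)
    (hgx : g x = k ^ 2) :
    x ∈ convexHull 𝕜 {y ∈ s | f y = k} := by
  have hmin : ∀ y ∈ s, -k ^ 2 ≤ (g - (2 * k) • f) y := fun y hy => by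
    simp only [LinearMap.sub_apply, LinearMap.smul_apply, smul_eq_mul]
    nlinarith [hs y hy, sq_nonneg (f y - k)]
  refine convexHull_mono ?_
    (mem_convexHull_sep_of_le_of_apply_eq hmin hx (by simp [hfx, hgx]; ring))
  rintro y ⟨hy, hφy⟩
  refine ⟨hy, ?_⟩
  simp only [LinearMap.sub_apply, LinearMap.smul_apply, smul_eq_mul] at hφy
  have : (f y - k) ^ 2 = 0 := le_antisymm (by nlinarith [hs y hy]) (sq_nonneg _)
  exact sub_eq_zero.1 (pow_eq_zero_iff two_ne_zero |>.1 this)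

end LevelSet

namespace Matrix

variable {m n R : Type*} [Fintype m] [Fintype n] [CommSemiring R]

def entrySum : Matrix m n R →ₗ[R] R where
  toFun X := ∑ i, ∑ j, X i j
  map_add' X Y := by simp only [add_apply, sum_add_distrib]
  map_smul' c X := by simp only [smul_apply, smul_eq_mul, mul_sum, RingHom.id_apply]

theorem entrySum_apply (X : Matrix m n R) : entrySum X = ∑ i, ∑ j, X i j := rfl

theorem entrySum_vecMulVec (u : m → R) (v : n → R) :
    entrySum (vecMulVec u v) = (∑ i, u i) * ∑ j, v j := by
  simp only [entrySum_apply, vecMulVec_apply, sum_mul_sum]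

theorem trace_vecMulVec_self {v : n → R} (hv : ∀ i, IsIdempotentElem (v i)) :
    trace (vecMulVec v v) = ∑ i, v i := by
  rw [trace_vecMulVec]
  exact sum_congr rfl fun i _ => hv i

end Matrix

/-- If `X` lies in the correlation polytope `Conv({v vᵀ : v ∈ {0,1}^n})` and
satisfies `tr(X) = k` and `∑_{i,j} X_{ij} = k²`, then `X` lies in
`P(n,k) = Conv({v vᵀ : v ∈ {0,1}^n, ∑ v_i = k})`. -/
theorem stmt_14 (n k : ℕ) (X : Matrix (Fin n) (Fin n) ℝ)
    (hX : X ∈ convexHull ℝ {M : Matrix (Fin n) (Fin n) ℝ |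
      ∃ v : Fin n → ℝ, (∀ i, v i = 0 ∨ v i = 1) ∧ M = Matrix.vecMulVec v v})
    (htr : X.trace = (k : ℝ))
    (hsum : (∑ i, ∑ j, X i j) = (k : ℝ) ^ 2) :
    X ∈ convexHull ℝ {M : Matrix (Fin n) (Fin n) ℝ |
      ∃ v : Fin n → ℝ, (∀ i, v i = 0 ∨ v i = 1) ∧ (∑ i, v i = (k : ℝ)) ∧
        M = Matrix.vecMulVec v v} := by
  have trace_eq_sum : ∀ v : Fin n → ℝ, (∀ i, v i = 0 ∨ v i = 1) →
      trace (vecMulVec v v) = ∑ i, v i := fun v hv => by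
    refine trace_vecMulVec_self fun i => ?_
    rcases hv i with h | h <;> rw [h]
    exacts [.zero, .one]
  have hatom : ∀ M ∈ {M : Matrix (Fin n) (Fin n) ℝ |
      ∃ v : Fin n → ℝ, (∀ i, v i = 0 ∨ v i = 1) ∧ M = vecMulVec v v},
      traceLinearMap (Fin n) ℝ ℝ M ^ 2 ≤ entrySum M := by
    rintro _ ⟨v, hv, rfl⟩
    rw [traceLinearMap_apply, trace_eq_sum v hv, entrySum_vecMulVec, sq]
  refine convexHull_mono ?_ (mem_convexHull_sep_of_sq_le hatom hX htr hsum)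
  rintro _ ⟨⟨v, hv, rfl⟩, htrv⟩
  exact ⟨v, hv, (trace_eq_sum v hv).symm.trans htrv, rfl⟩
end

section
/- Comb Sampling on n targets with marginal vector x ∈ [0,1]^n with ∑_i x_i = k produces a mixed strategy whose support contains at most n + 1 distinct pure strategies. -/
open Finset

/-! With prefix sums `p m = x 0 + ⋯ + x (m - 1)`, target `i` occupies `[p i, p (i + 1))`. For an
integer `t` and `h ∈ [0, 1)`, whether `p ≤ t + h` is decided by `⌊p⌋`, `t` and whether
`fract p ≤ h`; so the sampled set at height `h` depends only on `{m | fract (p m) ≤ h}`. These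
threshold sets grow with `h` and always contain `m = 0`, so they form a chain of nonempty subsets
of an `(n + 1)`-element set, which has at most `n + 1` members. -/

section FloorRing

variable {α : Type*} [CommRing α] [LinearOrder α] [IsStrictOrderedRing α] [FloorRing α]

lemma le_intCast_add_iff {a h : α} (t : ℤ) (h0 : 0 ≤ h) (h1 : h < 1) :
    a ≤ t + h ↔ ⌊a⌋ < t ∨ (⌊a⌋ = t ∧ Int.fract a ≤ h) := by
  have ha := Int.floor_add_fract a
  rcases lt_trichotomy ⌊a⌋ t with hlt | rfl | hgt
  · have : (⌊a⌋ : α) + 1 ≤ t := by exact_mod_cast hlt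
    simp only [hlt, true_or, iff_true]
    linarith [Int.fract_lt_one a]
  · simp only [lt_irrefl, true_and, false_or, ← Int.self_sub_floor, sub_le_iff_le_add']
  · have : (t : α) + 1 ≤ ⌊a⌋ := by exact_mod_cast hgt
    simp only [hgt.ne', not_lt.2 hgt.le, false_and, or_false, iff_false, not_le]
    linarith [Int.fract_nonneg a]

lemma intCast_add_mem_Ico_congr {a b h h' : α} (t : ℤ) (hh : h ∈ Set.Ico 0 1)
    (hh' : h' ∈ Set.Ico 0 1) (ha : Int.fract a ≤ h ↔ Int.fract a ≤ h')
    (hb : Int.fract b ≤ h ↔ Int.fract b ≤ h') :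
    (t : α) + h ∈ Set.Ico a b ↔ (t : α) + h' ∈ Set.Ico a b := by
  simp only [Set.mem_Ico, ← not_le (a := b), le_intCast_add_iff t hh.1 hh.2,
    le_intCast_add_iff t hh'.1 hh'.2, ha, hb]

end FloorRing

theorem Set.ncard_image_le_ncard_image_of_factors {ι β γ : Type*} {s : Set ι} {f : ι → β}
    {g : ι → γ} (hs : (f '' s).Finite) (hfg : ∀ x ∈ s, ∀ y ∈ s, f x = f y → g x = g y) :
    (g '' s).ncard ≤ (f '' s).ncard := by
  obtain rfl | ⟨x₀, -⟩ := s.eq_empty_or_nonempty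
  · simp
  have : Nonempty ι := ⟨x₀⟩
  have : g '' s = (g ∘ Function.invFunOn f s) '' (f '' s) := by
    rw [Set.image_image]
    exact Set.image_congr fun x hx =>
      (hfg _ (Function.invFunOn_mem ⟨x, hx, rfl⟩) _ hx (Function.invFunOn_apply_eq hx)).symm
  rw [this]
  exact Set.ncard_image_le hs

theorem IsChain.ncard_le_card_of_nonempty {ι : Type*} [Finite ι] {𝒮 : Set (Set ι)}
    (h𝒮 : IsChain (· ⊆ ·) 𝒮) (hne : ∀ s ∈ 𝒮, s.Nonempty) : 𝒮.ncard ≤ Nat.card ι := by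
  calc 𝒮.ncard ≤ (Set.Icc 1 (Nat.card ι)).ncard := by
        refine Set.ncard_le_ncard_of_injOn Set.ncard (fun s hs => ⟨?_, ?_⟩) ?_ (Set.toFinite _)
        · exact (Set.ncard_pos (Set.toFinite s)).2 (hne s hs)
        · exact Set.ncard_le_card s
        · intro s hs t ht hst
          rcases h𝒮.total hs ht with hsub | hsub
          · exact Set.eq_of_subset_of_ncard_le hsub hst.ge
          · exact (Set.eq_of_subset_of_ncard_le hsub hst.le).symm
    _ = Nat.card ι := by simp

section CombSampling

variable {n : ℕ}

def prefixSum (x : Fin n → ℝ) (m : ℕ) : ℝ :=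
  ∑ j ∈ univ.filter (fun j : Fin n => (j : ℕ) < m), x j

def combSample (x : Fin n → ℝ) (k : ℕ) (h : ℝ) : Set (Fin n) :=
  {i | ∃ t : ℕ, t < k ∧ (t : ℝ) + h ∈ Set.Ico (∑ j ∈ univ.filter (· < i), x j)
    (∑ j ∈ univ.filter (· ≤ i), x j)}

lemma sum_filter_lt_eq_prefixSum (x : Fin n → ℝ) (i : Fin n) :
    ∑ j ∈ univ.filter (· < i), x j = prefixSum x i := by
  simp only [prefixSum, Fin.lt_def]

lemma sum_filter_le_eq_prefixSum (x : Fin n → ℝ) (i : Fin n) :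
    ∑ j ∈ univ.filter (· ≤ i), x j = prefixSum x (i + 1) := by
  simp only [prefixSum, Fin.le_def, Nat.lt_succ_iff]

lemma combSample_eq_of_fract_le_iff {x : Fin n → ℝ} {k : ℕ} {h h' : ℝ}
    (hh : h ∈ Set.Ico 0 1) (hh' : h' ∈ Set.Ico 0 1)
    (H : ∀ m : Fin (n + 1), Int.fract (prefixSum x m) ≤ h ↔ Int.fract (prefixSum x m) ≤ h') :
    combSample x k h = combSample x k h' := by
  ext i
  simp only [combSample, sum_filter_lt_eq_prefixSum, sum_filter_le_eq_prefixSum]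
  refine exists_congr fun t => and_congr_right fun _ => ?_
  exact_mod_cast intCast_add_mem_Ico_congr (t : ℤ) hh hh' (by simpa using H i.castSucc)
    (by simpa using H i.succ)

end CombSampling

theorem stmt_18_general (n k : ℕ) (x : Fin n → ℝ) :
    {S : Set (Fin n) | ∃ h ∈ Set.Ico (0 : ℝ) 1,
        S = {i : Fin n | ∃ t : ℕ, t < k ∧
          (t : ℝ) + h ∈ Set.Ico (∑ j ∈ Finset.univ.filter (· < i), x j)
            (∑ j ∈ Finset.univ.filter (· ≤ i), x j)}}.Finite ∧
    {S : Set (Fin n) | ∃ h ∈ Set.Ico (0 : ℝ) 1,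
        S = {i : Fin n | ∃ t : ℕ, t < k ∧
          (t : ℝ) + h ∈ Set.Ico (∑ j ∈ Finset.univ.filter (· < i), x j)
            (∑ j ∈ Finset.univ.filter (· ≤ i), x j)}}.ncard ≤ n + 1 := by
  refine ⟨Set.toFinite _, ?_⟩
  change {S | ∃ h ∈ Set.Ico (0 : ℝ) 1, S = combSample x k h}.ncard ≤ n + 1
  have hfamily : {S | ∃ h ∈ Set.Ico (0 : ℝ) 1, S = combSample x k h}
      = combSample x k '' Set.Ico 0 1 := by
    ext S
    exact exists_congr fun h => and_congr_right fun _ => eq_comm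
  let thresholds (h : ℝ) : Set (Fin (n + 1)) := {m | Int.fract (prefixSum x m) ≤ h}
  have hmono : Monotone thresholds := fun h h' hle m hm => le_trans hm hle
  rw [hfamily]
  calc (combSample x k '' Set.Ico 0 1).ncard ≤ (thresholds '' Set.Ico 0 1).ncard :=
        Set.ncard_image_le_ncard_image_of_factors (Set.toFinite _)
          fun h hh h' hh' he => combSample_eq_of_fract_le_iff hh hh' (Set.ext_iff.1 he)
    _ ≤ Nat.card (Fin (n + 1)) := by
        refine (hmono.isChain_range.mono (Set.image_subset_range _ _)).ncard_le_card_of_nonempty ?_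
        rintro _ ⟨h, hh, rfl⟩
        exact ⟨0, by simpa [thresholds, prefixSum] using hh.1⟩
    _ = n + 1 := Nat.card_fin _

/-- Comb Sampling: the targets are laid out contiguously (target `i` occupying the
interval `[∑_{j<i} x_j, ∑_{j≤i} x_j)` of total length `k`, viewed as `k` unit
buckets), and for height `h ∈ [0,1)` the sampled pure strategy is the set of
targets whose segment meets height `h` in one of the `k` buckets. The resulting
mixed strategy has at most `n + 1` distinct pure strategies in its support. -/
theorem stmt_18 (n k : ℕ) (x : Fin n → ℝ) (hx0 : ∀ i, 0 ≤ x i) (hx1 : ∀ i, x i ≤ 1)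
    (hsum : ∑ i, x i = (k : ℝ)) :
    {S : Set (Fin n) | ∃ h ∈ Set.Ico (0 : ℝ) 1,
        S = {i : Fin n | ∃ t : ℕ, t < k ∧
          (t : ℝ) + h ∈ Set.Ico (∑ j ∈ Finset.univ.filter (· < i), x j)
            (∑ j ∈ Finset.univ.filter (· ≤ i), x j)}}.Finite ∧
    {S : Set (Fin n) | ∃ h ∈ Set.Ico (0 : ℝ) 1,
        S = {i : Fin n | ∃ t : ℕ, t < k ∧
          (t : ℝ) + h ∈ Set.Ico (∑ j ∈ Finset.univ.filter (· < i), x j)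
            (∑ j ∈ Finset.univ.filter (· ≤ i), x j)}}.ncard ≤ n + 1 :=
  stmt_18_general n k x
end
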